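/- Let e₁, e₂, e₃ be complex numbers with e₁ + e₂ + e₃ = 0, and set g₂ = −4(e₁e₂ + e₂e₃ + e₃e₁), g₃ = 4e₁e₂e₃. Define the rational function ξ(E) = −(E³ − 27g₃)/(9(E² − 3g₂)). Then the hyperelliptic-to-elliptic differential reduction dξ/√(4ξ³ − g₂ξ − g₃) = −(3/2)·E dE/√(−(E² − 3g₂)(E − 3e₁)(E − 3e₂)(E − 3e₃)) holds; equivalently, as an identity of rational functions in E, (ξ'(E))² · (−(E² − 3g₂)(E − 3e₁)(E − 3e₂)(E − 3e₃)) = (9/4)·E² · (4ξ(E)³ − g₂ξ(E) − g₃). -/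
import Mathlib


noncomputable section

set_option maxHeartbeats 1000000

/-- hyperelliptic-to-elliptic reduction, Eq. `alpint11000^2`.
Let `e₁ + e₂ + e₃ = 0`, `g₂ = -4(e₁e₂ + e₂e₃ + e₃e₁)`, `g₃ = 4e₁e₂e₃`, and
`ξ(E) = -(E³ - 27g₃)/(9(E² - 3g₂))`.  Then (as an identity of rational functions,
stated here at every `E` with `E² ≠ 3g₂`)
`ξ'(E)²·(-(E² - 3g₂)(E - 3e₁)(E - 3e₂)(E - 3e₃)) = (9/4)·E²·(4ξ(E)³ - g₂ξ(E) - g₃)`. -/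
theorem statement7
    (e1 e2 e3 : ℂ) (hsum : e1 + e2 + e3 = 0)
    (g2 g3 : ℂ)
    (hg2 : g2 = -4 * (e1 * e2 + e2 * e3 + e3 * e1))
    (hg3 : g3 = 4 * (e1 * e2 * e3))
    (ξ : ℂ → ℂ)
    (hξ : ∀ E : ℂ, ξ E = -((E ^ 3 - 27 * g3) / (9 * (E ^ 2 - 3 * g2))))
    (E : ℂ) (hE : E ^ 2 ≠ 3 * g2) :
    (deriv ξ E) ^ 2 *
        (-((E ^ 2 - 3 * g2) * (E - 3 * e1) * (E - 3 * e2) * (E - 3 * e3))) =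
      (9 / 4) * E ^ 2 * (4 * ξ E ^ 3 - g2 * ξ E - g3) := by
  have hfun : ξ = fun E : ℂ => -((E ^ 3 - 27 * g3) / (9 * (E ^ 2 - 3 * g2))) :=
    funext hξ
  have hden' : E ^ 2 - 3 * g2 ≠ 0 := sub_ne_zero.mpr hE
  have hden : (9 : ℂ) * (E ^ 2 - 3 * g2) ≠ 0 := mul_ne_zero (by norm_num) hden'
  have hd : HasDerivAt ξ
      (-((3 * E ^ 2 * (9 * (E ^ 2 - 3 * g2)) - (E ^ 3 - 27 * g3) * (9 * (2 * E))) /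
        (9 * (E ^ 2 - 3 * g2)) ^ 2)) E := by
    rw [hfun]
    have h1 : HasDerivAt (fun E : ℂ => E ^ 3 - 27 * g3) (3 * E ^ 2) E := by
      simpa using ((hasDerivAt_pow 3 E).sub_const (27 * g3))
    have h2 : HasDerivAt (fun E : ℂ => 9 * (E ^ 2 - 3 * g2)) (9 * (2 * E)) E := by
      simpa using (((hasDerivAt_pow 2 E).sub_const (3 * g2)).const_mul (9 : ℂ))
    exact (h1.div h2 hden).neg
  rw [hd.deriv, hξ E]
  have he3 : e3 = -e1 - e2 := by linear_combination hsum
  field_simp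
  subst hg2 hg3 he3
  ring
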